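/- Suppose X is a smooth vector field on a complete noncompact oriented Riemannian manifold Σⁿ such that div X does not change sign on Σ and |X| ∈ L¹(Σ). Then div X = 0 on Σ. -/

import Mathlib

open MeasureTheory

/-- The divergence of a vector field, as the trace of its total derivative. -/
noncomputable def vdiv {n : ℕ}
    (X : EuclideanSpace ℝ (Fin n) → EuclideanSpace ℝ (Fin n))
    (x : EuclideanSpace ℝ (Fin n)) : ℝ :=
  LinearMap.trace ℝ (EuclideanSpace ℝ (Fin n)) (fderiv ℝ X x).toLinearMap

open Metric

lemma vdiv_eq_sum {n : ℕ} (X : EuclideanSpace ℝ (Fin n) → EuclideanSpace ℝ (Fin n))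
    (x : EuclideanSpace ℝ (Fin n)) :
    vdiv X x = ∑ i, fderiv ℝ X x (EuclideanSpace.single i 1) i := by
  rw [vdiv, LinearMap.trace_eq_matrix_trace ℝ (EuclideanSpace.basisFun (Fin n) ℝ).toBasis,
    Matrix.trace]
  simp [Matrix.diag, LinearMap.toMatrix_apply, EuclideanSpace.basisFun_apply]

lemma coord_fderiv {n : ℕ} {X : EuclideanSpace ℝ (Fin n) → EuclideanSpace ℝ (Fin n)}
    (hX : Differentiable ℝ X) (i : Fin n) (x v : EuclideanSpace ℝ (Fin n)) :
    fderiv ℝ (fun y => X y i) x v = fderiv ℝ X x v i := by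
  have h := ((EuclideanSpace.proj (𝕜 := ℝ) i).hasFDerivAt.comp x (hX x).hasFDerivAt).fderiv
  have he : (fun y => X y i) = (EuclideanSpace.proj (𝕜 := ℝ) i) ∘ X := rfl
  rw [he, h]; rfl

lemma abs_coord_le {n : ℕ} (y : EuclideanSpace ℝ (Fin n)) (i : Fin n) : |y i| ≤ ‖y‖ := by
  rw [EuclideanSpace.norm_eq, ← Real.sqrt_sq_eq_abs]
  refine Real.sqrt_le_sqrt ?_
  have := Finset.single_le_sum (f := fun j => ‖y j‖ ^ 2) (fun j _ => sq_nonneg _)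
    (Finset.mem_univ i)
  simpa [Real.norm_eq_abs, sq_abs] using this

lemma sum_coord_smul {n : ℕ} (y : EuclideanSpace ℝ (Fin n)) :
    ∑ i, y i • EuclideanSpace.single i (1 : ℝ) = y := by
  have := (EuclideanSpace.basisFun (Fin n) ℝ).toBasis.sum_repr y
  simpa [EuclideanSpace.basisFun_apply] using this

lemma key {n : ℕ} (X : EuclideanSpace ℝ (Fin n) → EuclideanSpace ℝ (Fin n))
    (hX : ContDiff ℝ (⊤ : ℕ∞) X)
    (hsign : ∀ x, 0 ≤ vdiv X x)
    (hL1 : Integrable (fun x => ‖X x‖)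
      (volume : Measure (EuclideanSpace ℝ (Fin n)))) :
    ∀ x, vdiv X x = 0 := by
  intro x0
  by_contra h0
  have hdiff : Differentiable ℝ X := hX.differentiable (by simp)
  have hXc : Continuous X := hdiff.continuous
  have hfc : Continuous (fun x => fderiv ℝ X x) := hX.continuous_fderiv (by simp)
  -- continuity of vdiv X
  have hgc : Continuous (vdiv X) := by
    have : (vdiv X) = fun x => ∑ i, fderiv ℝ X x (EuclideanSpace.single i 1) i :=
      funext (vdiv_eq_sum X)
    rw [this]
    refine continuous_finset_sum _ (fun i _ => ?_)
    exact (EuclideanSpace.proj (𝕜 := ℝ) i).continuous.comp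
      (hfc.clm_apply continuous_const)
  set c := vdiv X x0 with hc_def
  have hc : 0 < c := (hsign x0).lt_of_ne (Ne.symm h0)
  -- find a ball where vdiv X ≥ c/2
  obtain ⟨δ, hδ, hball⟩ := Metric.continuousAt_iff.mp (hgc.continuousAt (x := x0)) (c/2)
    (half_pos hc)
  set r := δ / 2 with hr_def
  have hrpos : 0 < r := half_pos hδ
  have hge : ∀ x ∈ closedBall x0 r, c/2 ≤ vdiv X x := by
    intro x hx
    have hd : dist x x0 < δ := lt_of_le_of_lt (mem_closedBall.mp hx) (by linarith)
    have := hball hd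
    rw [Real.dist_eq] at this
    have := abs_lt.mp this
    linarith [this.1]
  set κ := (volume (closedBall x0 r)).toReal * (c/2) with hκ_def
  have hκ : 0 < κ := by
    refine mul_pos (ENNReal.toReal_pos (ne_of_gt ?_) (ne_of_lt measure_closedBall_lt_top))
      (half_pos hc)
    exact lt_of_lt_of_le (measure_ball_pos _ _ hrpos) (measure_mono ball_subset_closedBall)
  set I := ∫ x, ‖X x‖ with hI_def
  have hI0 : 0 ≤ I := integral_nonneg (fun x => norm_nonneg _)
  -- bump function
  let φ : ContDiffBump (0 : EuclideanSpace ℝ (Fin n)) := ⟨1, 2, one_pos, one_lt_two⟩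
  have hφcd : ContDiff ℝ ((⊤:ℕ∞) : WithTop ℕ∞) (φ : EuclideanSpace ℝ (Fin n) → ℝ) := φ.contDiff
  have hφdiff : Differentiable ℝ (φ : EuclideanSpace ℝ (Fin n) → ℝ) :=
    hφcd.differentiable (by simp)
  obtain ⟨C, hC⟩ := ((φ.hasCompactSupport.fderiv ℝ).exists_bound_of_continuous
    (hφcd.continuous_fderiv (by simp)))
  have hC0 : 0 ≤ C := le_trans (norm_nonneg _) (hC 0)
  -- the main estimate
  have main : ∀ R : ℝ, 0 < R → ‖x0‖ + r ≤ R → κ ≤ (C * I) / R := by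
    intro R hR hRbig
    set A : EuclideanSpace ℝ (Fin n) →L[ℝ] EuclideanSpace ℝ (Fin n) :=
      R⁻¹ • ContinuousLinearMap.id ℝ (EuclideanSpace ℝ (Fin n)) with hA_def
    have hAx : ∀ x, A x = R⁻¹ • x := fun x => rfl
    have hAnormx : ∀ x, ‖A x‖ = R⁻¹ * ‖x‖ := by
      intro x; rw [hAx, norm_smul, Real.norm_eq_abs, abs_of_pos (inv_pos.mpr hR)]
    set φR : EuclideanSpace ℝ (Fin n) → ℝ := fun x => φ (A x) with hφR_def
    have hφRd : ∀ x, HasFDerivAt φR ((fderiv ℝ (φ : EuclideanSpace ℝ (Fin n) → ℝ) (A x)).comp A) x :=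
      fun x => ((hφdiff (A x)).hasFDerivAt).comp x A.hasFDerivAt
    have hφR' : ∀ x, fderiv ℝ φR x = (fderiv ℝ (φ : EuclideanSpace ℝ (Fin n) → ℝ) (A x)).comp A :=
      fun x => (hφRd x).fderiv
    have hφRdiff : Differentiable ℝ φR := fun x => (hφRd x).differentiableAt
    have hφRcont : Continuous φR := φ.continuous.comp A.continuous
    have hAnorm : ‖A‖ ≤ R⁻¹ := by
      refine ContinuousLinearMap.opNorm_le_bound _ (inv_pos.mpr hR).le (fun x => ?_)
      rw [hAnormx x]
    have hd : ∀ x, ‖fderiv ℝ φR x‖ ≤ C * R⁻¹ := by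
      intro x
      rw [hφR' x]
      calc ‖(fderiv ℝ (φ : EuclideanSpace ℝ (Fin n) → ℝ) (A x)).comp A‖
          ≤ ‖fderiv ℝ (φ : EuclideanSpace ℝ (Fin n) → ℝ) (A x)‖ * ‖A‖ :=
            ContinuousLinearMap.opNorm_comp_le _ _
        _ ≤ C * R⁻¹ := mul_le_mul (hC _) hAnorm (norm_nonneg _) hC0
    have hφRfc : Continuous (fun x => fderiv ℝ φR x) := by
      have h1 : Continuous fun x => fderiv ℝ (φ : EuclideanSpace ℝ (Fin n) → ℝ) (A x) :=
        (hφcd.continuous_fderiv (by simp)).comp A.continuous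
      have h2 : Continuous fun x =>
          ((ContinuousLinearMap.compL ℝ (EuclideanSpace ℝ (Fin n)) (EuclideanSpace ℝ (Fin n)) ℝ).flip A)
          (fderiv ℝ (φ : EuclideanSpace ℝ (Fin n) → ℝ) (A x)) :=
        (ContinuousLinearMap.continuous _).comp h1
      convert h2 using 1
      funext x
      rw [hφR' x]
      rfl
    -- φR = 1 on ball of radius R, vanishes outside 2R
    have hφR1 : ∀ x : EuclideanSpace ℝ (Fin n), ‖x‖ ≤ R → φR x = 1 := by
      intro x hx
      apply φ.one_of_mem_closedBall
      rw [mem_closedBall_zero_iff, hAnormx]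
      calc R⁻¹ * ‖x‖ ≤ R⁻¹ * R := mul_le_mul_of_nonneg_left hx (inv_pos.mpr hR).le
        _ = 1 := inv_mul_cancel₀ hR.ne'
    have hφR0 : ∀ x : EuclideanSpace ℝ (Fin n), 2 * R < ‖x‖ → φR x = 0 := by
      intro x hx
      have : A x ∉ Function.support (φ : EuclideanSpace ℝ (Fin n) → ℝ) := by
        rw [φ.support_eq, mem_ball_zero_iff, hAnormx]
        push_neg
        calc (2 : ℝ) = R⁻¹ * (2 * R) := by field_simp
          _ ≤ R⁻¹ * ‖x‖ := mul_le_mul_of_nonneg_left hx.le (inv_pos.mpr hR).le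
      exact Function.notMem_support.mp this
    have hφRnn : ∀ x, 0 ≤ φR x := fun x => φ.nonneg
    have hφRle1 : ∀ x, φR x ≤ 1 := fun x => φ.le_one
    -- per-coordinate integration by parts
    have hco : ∀ (i : Fin n) x v, fderiv ℝ (fun y => X y i) x v = fderiv ℝ X x v i :=
      fun i x v => coord_fderiv hdiff i x v
    have hXicont : ∀ i : Fin n, Continuous fun x => fderiv ℝ X x (EuclideanSpace.single i 1) i :=
      fun i => (EuclideanSpace.proj (𝕜 := ℝ) i).continuous.comp (hfc.clm_apply continuous_const)
    have hf'g : ∀ i : Fin n, Integrable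
        (fun x => fderiv ℝ φR x (EuclideanSpace.single i 1) * X x i) volume := by
      intro i
      refine Integrable.mono' (hL1.const_mul (C * R⁻¹)) ?_ (ae_of_all _ fun x => ?_)
      · exact ((hφRfc.clm_apply continuous_const).mul
          ((EuclideanSpace.proj (𝕜 := ℝ) i).continuous.comp hXc)).aestronglyMeasurable
      · rw [Real.norm_eq_abs, abs_mul]
        have h1 : |fderiv ℝ φR x (EuclideanSpace.single i 1)| ≤ C * R⁻¹ := by
          have h2 := (fderiv ℝ φR x).le_opNorm (EuclideanSpace.single i (1:ℝ))
          rw [EuclideanSpace.norm_single, norm_one, mul_one, Real.norm_eq_abs] at h2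
          exact le_trans h2 (hd x)
        exact mul_le_mul h1 (abs_coord_le _ i) (abs_nonneg _)
          (mul_nonneg hC0 (inv_pos.mpr hR).le)
    have hsupp : ∀ f : EuclideanSpace ℝ (Fin n) → ℝ,
        HasCompactSupport (fun x => φR x * f x) := by
      intro f
      refine HasCompactSupport.intro (isCompact_closedBall 0 (2 * R)) (fun x hx => ?_)
      rw [hφR0 x (by simpa [mem_closedBall_zero_iff, not_le] using hx), zero_mul]
    have hfg' : ∀ i : Fin n, Integrable
        (fun x => φR x * fderiv ℝ (fun y => X y i) x (EuclideanSpace.single i 1)) volume := by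
      intro i
      have heq : (fun x => φR x * fderiv ℝ (fun y => X y i) x (EuclideanSpace.single i 1))
          = fun x => φR x * fderiv ℝ X x (EuclideanSpace.single i 1) i := by
        funext x; rw [hco]
      rw [heq]
      exact (hφRcont.mul (hXicont i)).integrable_of_hasCompactSupport (hsupp _)
    have hfg : ∀ i : Fin n, Integrable (fun x => φR x * X x i) volume := by
      intro i
      refine Integrable.mono' hL1 ?_ (ae_of_all _ fun x => ?_)
      · exact (hφRcont.mul ((EuclideanSpace.proj (𝕜 := ℝ) i).continuous.comp hXc)).aestronglyMeasurable
      · rw [Real.norm_eq_abs, abs_mul, abs_of_nonneg (hφRnn x)]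
        calc φR x * |X x i| ≤ 1 * ‖X x‖ :=
              mul_le_mul (hφRle1 x) (abs_coord_le _ i) (abs_nonneg _) zero_le_one
          _ = ‖X x‖ := one_mul _
    have ibp : ∀ i : Fin n,
        ∫ x, φR x * fderiv ℝ (fun y => X y i) x (EuclideanSpace.single i 1)
        = -∫ x, fderiv ℝ φR x (EuclideanSpace.single i 1) * X x i := by
      intro i
      have hXi_diff : Differentiable ℝ (fun y => X y i) := fun x =>
        (((EuclideanSpace.proj (𝕜 := ℝ) i).hasFDerivAt).comp x (hdiff x).hasFDerivAt).differentiableAt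
      exact integral_mul_fderiv_eq_neg_fderiv_mul_of_integrable
        (hf'g i) (hfg' i) (hfg i) (fun x _ => hφRdiff x) (fun x _ => hXi_diff x)
    -- assemble
    have hsum1 : ∫ x, φR x * vdiv X x
        = ∑ i, ∫ x, φR x * fderiv ℝ (fun y => X y i) x (EuclideanSpace.single i 1) := by
      rw [← integral_finset_sum _ (fun i _ => hfg' i)]
      congr 1
      funext x
      rw [vdiv_eq_sum, Finset.mul_sum]
      exact Finset.sum_congr rfl (fun i _ => by rw [hco])
    have hXxval : ∀ x : EuclideanSpace ℝ (Fin n),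
        ∑ i, fderiv ℝ φR x (EuclideanSpace.single i 1) * X x i = fderiv ℝ φR x (X x) := by
      intro x
      conv_rhs => rw [← sum_coord_smul (X x)]
      rw [map_sum]
      exact Finset.sum_congr rfl (fun i _ => by rw [_root_.map_smul, smul_eq_mul, mul_comm])
    have hhint : Integrable (fun x => fderiv ℝ φR x (X x)) volume := by
      refine Integrable.mono' (hL1.const_mul (C * R⁻¹)) ?_ (ae_of_all _ fun x => ?_)
      · exact (hφRfc.clm_apply hXc).aestronglyMeasurable
      · calc ‖fderiv ℝ φR x (X x)‖ ≤ ‖fderiv ℝ φR x‖ * ‖X x‖ := (fderiv ℝ φR x).le_opNorm _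
          _ ≤ (C * R⁻¹) * ‖X x‖ := mul_le_mul_of_nonneg_right (hd x) (norm_nonneg _)
    have hup : ∫ x, φR x * vdiv X x ≤ (C * I) / R := by
      rw [hsum1]
      calc ∑ i, ∫ x, φR x * fderiv ℝ (fun y => X y i) x (EuclideanSpace.single i 1)
          = -∑ i, ∫ x, fderiv ℝ φR x (EuclideanSpace.single i 1) * X x i := by
            rw [← Finset.sum_neg_distrib]
            exact Finset.sum_congr rfl (fun i _ => ibp i)
        _ = -∫ x, ∑ i, fderiv ℝ φR x (EuclideanSpace.single i 1) * X x i := by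
            rw [integral_finset_sum _ (fun i _ => hf'g i)]
        _ = -∫ x, fderiv ℝ φR x (X x) := by
            congr 1; exact integral_congr_ae (ae_of_all _ fun x => hXxval x)
        _ ≤ ‖∫ x, fderiv ℝ φR x (X x)‖ := (neg_le_abs _).trans_eq (Real.norm_eq_abs _).symm
        _ ≤ ∫ x, ‖fderiv ℝ φR x (X x)‖ := norm_integral_le_integral_norm _
        _ ≤ ∫ x, (C * R⁻¹) * ‖X x‖ := by
            refine integral_mono hhint.norm (hL1.const_mul _) (fun x => ?_)
            calc ‖fderiv ℝ φR x (X x)‖ ≤ ‖fderiv ℝ φR x‖ * ‖X x‖ := (fderiv ℝ φR x).le_opNorm _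
              _ ≤ (C * R⁻¹) * ‖X x‖ := mul_le_mul_of_nonneg_right (hd x) (norm_nonneg _)
        _ = (C * I) / R := by
            rw [integral_const_mul, ← hI_def]
            field_simp
    have hlow : κ ≤ ∫ x, φR x * vdiv X x := by
      have hint : Integrable (fun x => φR x * vdiv X x) volume :=
        (hφRcont.mul hgc).integrable_of_hasCompactSupport (hsupp _)
      have hind : ∫ x, (closedBall x0 r).indicator (fun _ => c/2) x = κ := by
        rw [integral_indicator_const _ measurableSet_closedBall, smul_eq_mul, hκ_def, measureReal_def]
      rw [← hind]
      refine integral_mono ((integrable_indicator_iff measurableSet_closedBall).mpr ?_) hint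
        (fun x => ?_)
      · exact integrableOn_const measure_closedBall_lt_top.ne
      · by_cases hx : x ∈ closedBall x0 r
        · rw [Set.indicator_of_mem hx]
          have hxR : ‖x‖ ≤ R := by
            have h5 := norm_sub_norm_le x x0
            rw [← dist_eq_norm] at h5
            linarith [mem_closedBall.mp hx]
          rw [hφR1 x hxR, one_mul]
          exact hge x hx
        · rw [Set.indicator_of_notMem hx]
          exact mul_nonneg (hφRnn x) (hsign x)
    linarith [le_trans hlow hup]
  -- choose R large to contradict
  set R := max (‖x0‖ + r) (C * I / κ + 1) with hR_def
  have hRpos : 0 < R := lt_of_lt_of_le (by positivity) (le_max_right _ _)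
  have h1 := main R hRpos (le_max_left _ _)
  have h2 : C * I / κ + 1 ≤ R := le_max_right _ _
  have h3 : C * I < κ * R := by
    have : κ * (C * I / κ + 1) = C * I + κ := by field_simp
    nlinarith [mul_le_mul_of_nonneg_left h2 hκ.le]
  have h4 : (C * I) / R < κ := (div_lt_iff₀ hRpos).mpr (by linarith [h3])
  linarith

lemma vdiv_neg {n : ℕ} (X : EuclideanSpace ℝ (Fin n) → EuclideanSpace ℝ (Fin n))
    (x : EuclideanSpace ℝ (Fin n)) : vdiv (fun y => -X y) x = -vdiv X x := by
  rw [vdiv, vdiv]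
  have h : fderiv ℝ (fun y => -X y) x = -fderiv ℝ X x := fderiv_neg
  rw [h]
  simp

/-- (Caminha–Souza–Camargo.) If X is a smooth vector field on a complete
noncompact oriented Riemannian manifold (here Euclidean space, n ≥ 1) whose
divergence does not change sign and with |X| ∈ L¹, then div X ≡ 0. -/
theorem stmt14 {n : ℕ} (hn : 0 < n)
    (X : EuclideanSpace ℝ (Fin n) → EuclideanSpace ℝ (Fin n))
    (hX : ContDiff ℝ (⊤ : ℕ∞) X)
    (hsign : (∀ x, 0 ≤ vdiv X x) ∨ (∀ x, vdiv X x ≤ 0))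
    (hL1 : Integrable (fun x => ‖X x‖)
      (volume : Measure (EuclideanSpace ℝ (Fin n)))) :
    ∀ x, vdiv X x = 0 := by
  rcases hsign with h | h
  · exact key X hX h hL1
  · intro x
    have hkey := key (fun y => -X y) hX.neg
      (fun y => by rw [vdiv_neg]; linarith [h y])
      (by simpa using hL1) x
    rw [vdiv_neg] at hkey
    linarith
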